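/- arXiv:2109.14135 — 5 statements merged into one kernel-verified Lean document; each statement's English description precedes it below -/
import Mathlib

section
/- Let $\bar{L} \in \mathbb{R}^{n\times n}$ be a graph Laplacian (nonpositive off-diagonal entries, zero row sums). If $b \in [0,1]^n$ and $o \in \mathbb{R}^n$ satisfies $(\bar{L}+I_n)o = b$, then $o \in [0,1]^n$, i.e., every entry of the solution lies in $[0,1]$. -/
open Matrix Filter

noncomputable def specRadius {n : ℕ} (M : Matrix (Fin n) (Fin n) ℝ) : ℝ :=
  sSup ((fun z : ℂ => ‖z‖) '' spectrum ℂ (M.map (Complex.ofReal)))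

noncomputable def specAbscissa {n : ℕ} (M : Matrix (Fin n) (Fin n) ℝ) : ℝ :=
  sSup (Complex.re '' spectrum ℂ (M.map (Complex.ofReal)))

def MatIrreducible {n : ℕ} (M : Matrix (Fin n) (Fin n) ℝ) : Prop :=
  ∀ S : Set (Fin n), S.Nonempty → S ≠ Set.univ → ∃ i ∈ S, ∃ j ∉ S, M i j ≠ 0

def IsLaplacian {n : ℕ} (L : Matrix (Fin n) (Fin n) ℝ) : Prop :=
  (∀ i j, i ≠ j → L i j ≤ 0) ∧ (∀ i, ∑ j, L i j = 0)

def IsMetzler {n : ℕ} (M : Matrix (Fin n) (Fin n) ℝ) : Prop :=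
  ∀ i j, i ≠ j → 0 ≤ M i j

/-!
Maximum principle: at an index `m` where `o` is maximal, `(L o)_m = ∑ⱼ L m j (o j - o m) ≥ 0`
since both factors are nonpositive off the diagonal, so `o m ≤ ((L + 1) o)_m = b m ≤ 1`.
The lower bound is the same argument applied to `-o`.
-/
theorem IsLaplacian.mulVec_nonneg_of_forall_le {n : ℕ} {L : Matrix (Fin n) (Fin n) ℝ}
    (hL : IsLaplacian L) {o : Fin n → ℝ} {m : Fin n} (hm : ∀ j, o j ≤ o m) :
    0 ≤ (L *ᵥ o) m := by
  have hshift : (L *ᵥ o) m = ∑ j, L m j * (o j - o m) := by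
    simp only [mulVec, dotProduct, mul_sub, Finset.sum_sub_distrib, ← Finset.sum_mul, hL.2 m,
      zero_mul, sub_zero]
  rw [hshift]
  refine Finset.sum_nonneg fun j _ => ?_
  rcases eq_or_ne m j with rfl | hne
  · simp
  · exact mul_nonneg_of_nonpos_of_nonpos (hL.1 m j hne) (sub_nonpos.2 (hm j))

theorem IsLaplacian.le_of_add_one_mulVec_eq {n : ℕ} {L : Matrix (Fin n) (Fin n) ℝ}
    (hL : IsLaplacian L) {b o : Fin n → ℝ} (ho : (L + 1) *ᵥ o = b) {c : ℝ}
    (hb : ∀ i, b i ≤ c) (i : Fin n) : o i ≤ c := by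
  obtain ⟨m, -, hm⟩ := Finset.exists_max_image Finset.univ o ⟨i, Finset.mem_univ i⟩
  have hLm : 0 ≤ (L *ᵥ o) m := hL.mulVec_nonneg_of_forall_le fun j => hm j (Finset.mem_univ j)
  have hbm : (L *ᵥ o) m + o m = b m := by
    rw [← ho, add_mulVec, one_mulVec, Pi.add_apply]
  calc o i ≤ o m := hm i (Finset.mem_univ i)
    _ ≤ b m := by linarith
    _ ≤ c := hb m

/-- `(L̄ + I)⁻¹` preserves the box `[0,1]ⁿ`. -/
theorem laplacian_plus_id_box_preserving {n : ℕ} (L : Matrix (Fin n) (Fin n) ℝ)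
    (hL : IsLaplacian L) (b o : Fin n → ℝ)
    (hb : ∀ i, b i ∈ Set.Icc (0:ℝ) 1)
    (ho : (L + 1).mulVec o = b) :
    ∀ i, o i ∈ Set.Icc (0:ℝ) 1 := by
  have hneg : (L + 1) *ᵥ (-o) = -b := by rw [mulVec_neg, ho]
  intro i
  refine ⟨?_, hL.le_of_add_one_mulVec_eq ho (fun j => (hb j).2) i⟩
  exact neg_nonpos.1 <| hL.le_of_add_one_mulVec_eq hneg (fun j => neg_nonpos.2 (hb j).1) i
end

section
/- For all $t \ge 0$ and all $o(t) \in [0,1]^n$, the effective reproduction number satisfies $R_{\min}(t) \le R_o(t) \le R_{\max}(t)$, where $R_{\min}(t) = \rho(G(\mathbf{1}_n)^{-1}\tilde{S}(t)B(\mathbf{1}_n))$ and $R_{\max}(t) = \rho(G(\mathbf{0})^{-1}\tilde{S}(t)B(\mathbf{0}))$. -/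
open Matrix Filter

/-!
Each entry `s i * B(o) i j / g o i` of the next-generation matrix is nonnegative and antitone
in the opinion vector `o ∈ [0,1]ⁿ`: the infection rate falls from `β i j` to its floor and the
recovery rate rises from `γmin` to `γ i`. For matrices with `0 ≤ A ≤ B` entrywise we have
`0 ≤ Aᵏ ≤ Bᵏ` entrywise, hence `‖Aᵏ‖ ≤ ‖Bᵏ‖` in the `ℓ∞` operator norm, and Gelfand's formula
`ρ(A) = lim ‖Aᵏ‖^(1/k)` gives `ρ(A) ≤ ρ(B)`.
-/

theorem Matrix.pow_apply_le_pow_apply {ι R : Type*} [Fintype ι] [DecidableEq ι] [Semiring R]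
    [PartialOrder R] [IsOrderedRing R] {A B : Matrix ι ι R}
    (hA : ∀ i j, 0 ≤ A i j) (hAB : ∀ i j, A i j ≤ B i j) (k : ℕ) (i j : ι) :
    (A ^ k) i j ≤ (B ^ k) i j := by
  induction k generalizing j with
  | zero => rfl
  | succ k ih =>
    rw [pow_succ, pow_succ, mul_apply, mul_apply]
    exact Finset.sum_le_sum fun l _ =>
      mul_le_mul (ih l) (hAB l j) (hA l j) ((pow_apply_nonneg hA k i l).trans (ih l))

section LInftyOpNorm
open scoped Matrix.Norms.Operator

theorem Matrix.linfty_opNNNorm_le_of_nnnorm_le {m n α : Type*} [Fintype m] [Fintype n]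
    [SeminormedAddCommGroup α] {A B : Matrix m n α} (h : ∀ i j, ‖A i j‖₊ ≤ ‖B i j‖₊) :
    ‖A‖₊ ≤ ‖B‖₊ := by
  rw [linfty_opNNNorm_def, linfty_opNNNorm_def]
  exact Finset.sup_mono_fun fun i _ => Finset.sum_le_sum fun j _ => h i j

namespace spectrum

theorem spectralRadius_le_of_nnnorm_pow_le {A : Type*} [NormedRing A] [NormedAlgebra ℂ A]
    [CompleteSpace A] {a b : A} (h : ∀ k : ℕ, ‖a ^ k‖₊ ≤ ‖b ^ k‖₊) :
    spectralRadius ℂ a ≤ spectralRadius ℂ b :=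
  le_of_tendsto_of_tendsto' (pow_nnnorm_pow_one_div_tendsto_nhds_spectralRadius a)
    (pow_nnnorm_pow_one_div_tendsto_nhds_spectralRadius b) fun k =>
    ENNReal.rpow_le_rpow (by exact_mod_cast h k) (by positivity)

theorem spectralRadius_eq_coe_sSup_nnnorm {𝕜 A : Type*} [NormedField 𝕜] [NormedRing A]
    [NormedAlgebra 𝕜 A] [CompleteSpace A] (a : A) :
    spectralRadius 𝕜 a = ↑(sSup (nnnorm '' spectrum 𝕜 a)) := by
  obtain ⟨C, hC⟩ := (isBounded (𝕜 := 𝕜) a).exists_norm_le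
  have hbdd : BddAbove (nnnorm '' spectrum 𝕜 a) :=
    ⟨C.toNNReal, by
      rintro _ ⟨z, hz, rfl⟩
      exact NNReal.le_toNNReal_of_coe_le (hC z hz)⟩
  rw [ENNReal.coe_sSup hbdd, iSup_image]
  rfl

end spectrum

-- Both sides are `0` when `n = 0`: the spectrum is empty and `sSup ∅ = 0`.
theorem specRadius_eq_toReal_spectralRadius {n : ℕ} (M : Matrix (Fin n) (Fin n) ℝ) :
    specRadius M = (spectralRadius ℂ (M.map Complex.ofReal)).toReal := by
  rw [spectrum.spectralRadius_eq_coe_sSup_nnnorm, ENNReal.coe_toReal, NNReal.coe_sSup,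
    Set.image_image]
  rfl

theorem specRadius_mono {n : ℕ} {A B : Matrix (Fin n) (Fin n) ℝ}
    (hA : ∀ i j, 0 ≤ A i j) (hAB : ∀ i j, A i j ≤ B i j) :
    specRadius A ≤ specRadius B := by
  have hpow (k : ℕ) : ‖(A.map Complex.ofReal) ^ k‖₊ ≤ ‖(B.map Complex.ofReal) ^ k‖₊ := by
    have hmap (M : Matrix (Fin n) (Fin n) ℝ) :
        M.map Complex.ofReal ^ k = (M ^ k).map Complex.ofReal :=
      (M.map_pow Complex.ofRealHom k).symm
    rw [hmap, hmap]
    refine linfty_opNNNorm_le_of_nnnorm_le fun i j => ?_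
    have h0 := pow_apply_nonneg hA k i j
    have h1 := pow_apply_le_pow_apply hA hAB k i j
    simp only [map_apply, ← NNReal.coe_le_coe, coe_nnnorm,
      Complex.norm_real, Real.norm_of_nonneg h0, Real.norm_of_nonneg (h0.trans h1), h1]
  rw [specRadius_eq_toReal_spectralRadius, specRadius_eq_toReal_spectralRadius]
  exact ENNReal.toReal_mono (by simp [spectrum.spectralRadius_eq_coe_sSup_nnnorm])
    (spectrum.spectralRadius_le_of_nnnorm_pow_le hpow)

end LInftyOpNorm

theorem interp_ratio_nonneg {s lo hi glo ghi v : ℝ} (hs : 0 ≤ s) (hlo : 0 ≤ lo)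
    (hlohi : lo ≤ hi) (hglo : 0 < glo) (hg : glo ≤ ghi) (hv : v ∈ Set.Icc (0 : ℝ) 1) :
    0 ≤ s * (hi - (hi - lo) * v) / (glo + (ghi - glo) * v) := by
  obtain ⟨hv0, hv1⟩ := hv
  apply div_nonneg (mul_nonneg hs _) <;> nlinarith

theorem interp_ratio_antitone {s lo hi glo ghi u v : ℝ} (hs : 0 ≤ s) (hlo : 0 ≤ lo)
    (hlohi : lo ≤ hi) (hglo : 0 < glo) (hg : glo ≤ ghi) (hu : 0 ≤ u) (huv : u ≤ v)
    (hv : v ≤ 1) :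
    s * (hi - (hi - lo) * v) / (glo + (ghi - glo) * v)
      ≤ s * (hi - (hi - lo) * u) / (glo + (ghi - glo) * u) := by
  apply div_le_div₀
  · exact mul_nonneg hs (by nlinarith)
  · exact mul_le_mul_of_nonneg_left (by nlinarith) hs
  · nlinarith
  · nlinarith

section Opinion

variable {n : ℕ} {β : Fin n → Fin n → ℝ} {γ : Fin n → ℝ} {βmin γmin : ℝ} {s : Fin n → ℝ}
  {Bo : (Fin n → ℝ) → Matrix (Fin n) (Fin n) ℝ} {g : (Fin n → ℝ) → Fin n → ℝ}

theorem specRadius_antitone_opinion (hβmin : 0 ≤ βmin) (hγmin : 0 < γmin)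
    (hβ : ∀ i j, β i j = 0 ∨ βmin ≤ β i j) (hγ : ∀ i, γmin ≤ γ i) (hs : ∀ i, 0 ≤ s i)
    (hBo : ∀ w i j, Bo w i j = β i j - (β i j - (if β i j = 0 then 0 else βmin)) * w i)
    (hg : ∀ w i, g w i = γmin + (γ i - γmin) * w i) ⦃w w' : Fin n → ℝ⦄
    (hw : ∀ i, w i ∈ Set.Icc (0 : ℝ) 1) (hw' : ∀ i, w' i ∈ Set.Icc (0 : ℝ) 1)
    (hww' : ∀ i, w i ≤ w' i) :
    specRadius (Matrix.of fun i j => s i * Bo w' i j / g w' i)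
      ≤ specRadius (Matrix.of fun i j => s i * Bo w i j / g w i) := by
  have hfloor (i j : Fin n) :
      0 ≤ (if β i j = 0 then 0 else βmin) ∧ (if β i j = 0 then 0 else βmin) ≤ β i j := by
    split_ifs with h
    · exact ⟨le_rfl, h.ge⟩
    · exact ⟨hβmin, (hβ i j).resolve_left h⟩
  refine specRadius_mono (fun i j => ?_) (fun i j => ?_) <;>
    simp only [Matrix.of_apply, hBo, hg]
  · exact interp_ratio_nonneg (hs i) (hfloor i j).1 (hfloor i j).2 hγmin (hγ i) (hw' i)
  · exact interp_ratio_antitone (hs i) (hfloor i j).1 (hfloor i j).2 hγmin (hγ i) (hw i).1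
      (hww' i) (hw' i).2

end Opinion

theorem effective_R_bounds_general {n : ℕ}
    (β : Fin n → Fin n → ℝ) (γ : Fin n → ℝ) (βmin γmin : ℝ)
    (hβmin : 0 < βmin) (hγmin : 0 < γmin)
    (hβ : ∀ i j, β i j = 0 ∨ βmin ≤ β i j) (hγ : ∀ i, γmin ≤ γ i)
    (s : Fin n → ℝ) (hs : ∀ i, s i ∈ Set.Icc (0:ℝ) 1)
    (o : Fin n → ℝ) (ho : ∀ i, o i ∈ Set.Icc (0:ℝ) 1)
    (Bo : (Fin n → ℝ) → Matrix (Fin n) (Fin n) ℝ)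
    (hBo : ∀ w i j, Bo w i j = β i j - (β i j - (if β i j = 0 then 0 else βmin)) * w i)
    (g : (Fin n → ℝ) → Fin n → ℝ) (hg : ∀ w i, g w i = γmin + (γ i - γmin) * w i) :
    specRadius (Matrix.of fun i j => s i * Bo (fun _ => 1) i j / g (fun _ => 1) i)
      ≤ specRadius (Matrix.of fun i j => s i * Bo o i j / g o i) ∧
    specRadius (Matrix.of fun i j => s i * Bo o i j / g o i)
      ≤ specRadius (Matrix.of fun i j => s i * Bo (fun _ => 0) i j / g (fun _ => 0) i) := by
  have hR_antitone := specRadius_antitone_opinion hβmin.le hγmin hβ hγ (fun i => (hs i).1) hBo hg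
  have hone (_ : Fin n) : (1 : ℝ) ∈ Set.Icc (0 : ℝ) 1 := Set.right_mem_Icc.2 zero_le_one
  have hzero (_ : Fin n) : (0 : ℝ) ∈ Set.Icc (0 : ℝ) 1 := Set.left_mem_Icc.2 zero_le_one
  exact ⟨hR_antitone ho hone fun i => (ho i).2, hR_antitone hzero ho fun i => (ho i).1⟩

/-- the effective reproduction number is sandwiched between the values
obtained at the extreme opinions `o_max = 1` and `o_min = 0`:
`R_min(t) ≤ R_o(t) ≤ R_max(t)`. -/
theorem effective_R_bounds {n : ℕ}
    (β : Fin n → Fin n → ℝ) (γ : Fin n → ℝ) (βmin γmin : ℝ)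
    (hβmin : 0 < βmin) (hγmin : 0 < γmin)
    (hβ : ∀ i j, β i j = 0 ∨ βmin ≤ β i j) (hγ : ∀ i, γmin ≤ γ i)
    (hBirr : MatIrreducible (Matrix.of β))
    (s : Fin n → ℝ) (hs : ∀ i, s i ∈ Set.Icc (0:ℝ) 1)
    (o : Fin n → ℝ) (ho : ∀ i, o i ∈ Set.Icc (0:ℝ) 1)
    (Bo : (Fin n → ℝ) → Matrix (Fin n) (Fin n) ℝ)
    (hBo : ∀ w i j, Bo w i j = β i j - (β i j - (if β i j = 0 then 0 else βmin)) * w i)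
    (g : (Fin n → ℝ) → Fin n → ℝ) (hg : ∀ w i, g w i = γmin + (γ i - γmin) * w i) :
    specRadius (Matrix.of fun i j => s i * Bo (fun _ => 1) i j / g (fun _ => 1) i)
      ≤ specRadius (Matrix.of fun i j => s i * Bo o i j / g o i) ∧
    specRadius (Matrix.of fun i j => s i * Bo o i j / g o i)
      ≤ specRadius (Matrix.of fun i j => s i * Bo (fun _ => 0) i j / g (fun _ => 0) i) :=
  effective_R_bounds_general β γ βmin γmin hβmin hγmin hβ hγ s hs o ho Bo hBo g hg
end

section
/- Let $M(t) = \tilde{S}(t)B(o(t)) - G(o(t))$ be the irreducible Metzler matrix governing $\dot{x}(t) = M(t)x(t)$, let $\sigma(t_p)$ be its spectral abscissa at time $t_p$, and let $p$ be the corresponding positive normalized left eigenvector, $p^\top M(t_p) = \sigma(t_p)\,p^\top$. If at time $t_p$ one has $\frac{d}{dt}\big(p^\top x(t)\big)\big|_{t=t_p} = 0$ and $x(t_p) \ne \mathbf{0}$ with $x(t_p) \ge \mathbf{0}$, then $\sigma(t_p) = 0$, and consequently $R_o(t_p) = \rho(G(o(t_p))^{-1}\tilde{S}(t_p)B(o(t_p)))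 = 1$. -/
open Matrix Filter

/-! Along `ẋ = Mx` one has `d/dt (pᵀx) = pᵀMx = σ pᵀx`, and `pᵀx > 0` for `x ≥ 0, x ≠ 0`, so
stationarity of `pᵀx` forces `σ = 0`. Then `pᵀ diag(s) B = pᵀ G`, i.e. `q = Gp ≫ 0` is a left
eigenvector of `G⁻¹ diag(s) B ≥ 0` for the eigenvalue `1`. A nonnegative matrix `A` with a positive
left eigenvector `qᵀA = r qᵀ` has spectral radius `r`: if `Av = μv` then `|μ| |v| ≤ A|v|`, and
pairing with `q` gives `|μ| ≤ r`. -/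

namespace Matrix

variable {ι K : Type*} [Fintype ι]

theorem mem_spectrum_iff_exists_mulVec_eq_smul [DecidableEq ι] [Field K] {A : Matrix ι ι K}
    {μ : K} : μ ∈ spectrum K A ↔ ∃ v ≠ 0, A *ᵥ v = μ • v := by
  rw [← spectrum_toLin', ← Module.End.hasEigenvalue_iff_mem_spectrum]
  constructor
  · intro h
    obtain ⟨v, hv⟩ := h.exists_hasEigenvector
    exact ⟨v, hv.2, hv.apply_eq_smul⟩
  · rintro ⟨v, hv, hAv⟩
    exact Module.End.hasEigenvalue_of_hasEigenvector
      ⟨Module.End.mem_eigenspace_iff.mpr hAv, hv⟩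

theorem mem_spectrum_of_vecMul_eq_smul [DecidableEq ι] [Field K] {A : Matrix ι ι K} {μ : K}
    {v : ι → K} (hv : v ≠ 0) (hvA : v ᵥ* A = μ • v) : μ ∈ spectrum K A := by
  have : μ ∈ spectrum K Aᵀ :=
    mem_spectrum_iff_exists_mulVec_eq_smul.mpr ⟨v, hv, by rwa [mulVec_transpose]⟩
  rwa [mem_spectrum_iff_isRoot_charpoly, charpoly_transpose,
    ← mem_spectrum_iff_isRoot_charpoly] at this

theorem mul_vecMul_of_div [Field K] (A : Matrix ι ι K) {g : ι → K} (hg : ∀ i, g i ≠ 0)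
    (p : ι → K) : (p * g) ᵥ* of (fun i j => A i j / g i) = p ᵥ* A := by
  ext j
  refine Finset.sum_congr rfl fun i _ => ?_
  simp only [Pi.mul_apply, of_apply]
  field_simp [hg i]

theorem dotProduct_pos_of_pos_of_nonneg {q w : ι → ℝ} (hq : ∀ i, 0 < q i) (hw : 0 ≤ w)
    (hw₀ : w ≠ 0) : 0 < q ⬝ᵥ w := by
  obtain ⟨i, hi⟩ := Function.ne_iff.mp hw₀
  exact Finset.sum_pos' (fun j _ => mul_nonneg (hq j).le (hw j))
    ⟨i, Finset.mem_univ _, mul_pos (hq i) ((hw i).lt_of_ne' hi)⟩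

theorem norm_le_of_mem_spectrum_of_vecMul_eq_smul [DecidableEq ι] {A : Matrix ι ι ℝ}
    (hA : ∀ i j, 0 ≤ A i j) {q : ι → ℝ} (hq : ∀ i, 0 < q i) {r : ℝ} (hqA : q ᵥ* A = r • q)
    {μ : ℂ} (hμ : μ ∈ spectrum ℂ (A.map Complex.ofReal)) : ‖μ‖ ≤ r := by
  obtain ⟨v, hv₀, hv⟩ := mem_spectrum_iff_exists_mulVec_eq_smul.mp hμ
  set w : ι → ℝ := fun i => ‖v i‖
  have hw₀ : w ≠ 0 := fun h => hv₀ (funext fun i => norm_eq_zero.mp (congrFun h i))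
  have hAw : ‖μ‖ • w ≤ A *ᵥ w := fun i =>
    calc ‖μ‖ * ‖v i‖ = ‖∑ j, (A i j : ℂ) * v j‖ := by
          rw [← norm_mul, ← smul_eq_mul, ← Pi.smul_apply, ← hv]; rfl
      _ ≤ ∑ j, ‖(A i j : ℂ) * v j‖ := norm_sum_le _ _
      _ = ∑ j, A i j * ‖v j‖ := by
          simp only [norm_mul, Complex.norm_real, Real.norm_of_nonneg (hA i _)]
  have hpos := dotProduct_pos_of_pos_of_nonneg hq (fun i => norm_nonneg (v i)) hw₀
  have : ‖μ‖ * (q ⬝ᵥ w) ≤ r * (q ⬝ᵥ w) :=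
    calc ‖μ‖ * (q ⬝ᵥ w) = q ⬝ᵥ (‖μ‖ • w) := by rw [dotProduct_smul, smul_eq_mul]
      _ ≤ q ⬝ᵥ (A *ᵥ w) := dotProduct_le_dotProduct_of_nonneg_left hAw fun i => (hq i).le
      _ = r * (q ⬝ᵥ w) := by rw [dotProduct_mulVec, hqA, smul_dotProduct, smul_eq_mul]
  exact le_of_mul_le_mul_right this hpos

end Matrix

theorem specRadius_eq_of_vecMul_eq_smul {n : ℕ} {A : Matrix (Fin n) (Fin n) ℝ}
    (hA : ∀ i j, 0 ≤ A i j) {q : Fin n → ℝ} (hq : ∀ i, 0 < q i) (hq₀ : q ≠ 0) {r : ℝ}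
    (hqA : q ᵥ* A = r • q) : specRadius A = r := by
  have hbound : ∀ z ∈ (fun z : ℂ => ‖z‖) '' spectrum ℂ (A.map Complex.ofReal), z ≤ r := by
    rintro _ ⟨μ, hμ, rfl⟩
    exact norm_le_of_mem_spectrum_of_vecMul_eq_smul hA hq hqA hμ
  have hr : (r : ℂ) ∈ spectrum ℂ (A.map Complex.ofReal) := by
    refine mem_spectrum_of_vecMul_eq_smul (v := fun i => (q i : ℂ)) ?_ ?_
    · exact fun h => hq₀ (funext fun i => Complex.ofReal_injective (congrFun h i))
    · ext j
      simpa [vecMul, dotProduct] using congrArg Complex.ofReal (congrFun hqA j)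
  have hnorm : ‖(r : ℂ)‖ = r := by
    rw [Complex.norm_real, Real.norm_eq_abs]
    exact le_antisymm (by simpa using hbound _ ⟨_, hr, rfl⟩) (le_abs_self r)
  exact IsGreatest.csSup_eq ⟨⟨_, hr, hnorm⟩, hbound⟩

theorem hasDerivAt_dotProduct_of_vecMul_eq_smul {ι : Type*} [Fintype ι] {M : Matrix ι ι ℝ}
    {x : ℝ → ι → ℝ} {t : ℝ} (hx : ∀ i, HasDerivAt (fun t => x t i) ((M *ᵥ x t) i) t)
    {p : ι → ℝ} {σ : ℝ} (hp : p ᵥ* M = σ • p) :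
    HasDerivAt (fun t => p ⬝ᵥ x t) (σ * (p ⬝ᵥ x t)) t := by
  have := HasDerivAt.fun_sum fun i (_ : i ∈ Finset.univ) => (hx i).const_mul (p i)
  rwa [← smul_eq_mul, ← smul_dotProduct, ← hp, ← dotProduct_mulVec]

theorem peak_infection_time_threshold_general {n : ℕ}
    (s : Fin n → ℝ) (hs : ∀ i, 0 < s i)
    (Bo : Matrix (Fin n) (Fin n) ℝ) (hBonn : ∀ i j, 0 ≤ Bo i j)
    (g : Fin n → ℝ) (hg : ∀ i, 0 < g i)
    -- `M = diag(s) B(o) − G(o)`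
    (M : Matrix (Fin n) (Fin n) ℝ)
    (hM : ∀ i j, M i j = s i * Bo i j - (if i = j then g i else 0))
    -- `p ≫ 0` is the normalized left eigenvector for the spectral abscissa of `M`
    (p : Fin n → ℝ) (hp : ∀ i, 0 < p i)
    (hpeig : ∀ j, ∑ i, p i * M i j = specAbscissa M * p j)
    (x : ℝ → Fin n → ℝ) (tp : ℝ)
    (hdyn : ∀ i, HasDerivAt (fun t => x t i) (∑ j, M i j * x tp j) tp)
    (hxnn : ∀ i, 0 ≤ x tp i) (hxne : x tp ≠ 0)
    (hstat : HasDerivAt (fun t => ∑ i, p i * x t i) 0 tp) :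
    specAbscissa M = 0 ∧
      specRadius (Matrix.of fun i j => s i * Bo i j / g i) = 1 := by
  have hpM : p ᵥ* M = specAbscissa M • p := funext hpeig
  have hσ : specAbscissa M = 0 := by
    have h := hstat.unique (hasDerivAt_dotProduct_of_vecMul_eq_smul hdyn hpM)
    exact (mul_eq_zero.mp h.symm).resolve_right
      (dotProduct_pos_of_pos_of_nonneg hp hxnn hxne).ne'
  have hM' : M = of (fun i j => s i * Bo i j) - diagonal g := by
    ext i j
    simp [hM, diagonal_apply]
  have hpK : p ᵥ* of (fun i j => s i * Bo i j) = p * g := by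
    have h : p ᵥ* M = 0 := by rw [hpM, hσ, zero_smul]
    rw [hM', vecMul_sub, sub_eq_zero] at h
    exact h.trans (funext (vecMul_diagonal p g))
  have hq₀ : p * g ≠ 0 := by
    obtain ⟨i, -⟩ := Function.ne_iff.mp hxne
    exact fun h => (mul_pos (hp i) (hg i)).ne' (congrFun h i)
  refine ⟨hσ, specRadius_eq_of_vecMul_eq_smul (q := p * g)
    (fun i j => div_nonneg (mul_nonneg (hs i).le (hBonn i j)) (hg i).le)
    (fun i => mul_pos (hp i) (hg i)) hq₀ ?_⟩
  exact (mul_vecMul_of_div _ (fun i => (hg i).ne') p).trans (hpK.trans (one_smul ℝ _).symm)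

/-- at a stationary point of the weighted average infection
`pᵀx(t)` (with `p` the positive left eigenvector of `M = diag(s)B(o) - G(o)`
associated with its spectral abscissa), the spectral abscissa vanishes and the
effective reproduction number equals one. -/
theorem peak_infection_time_threshold {n : ℕ}
    (s : Fin n → ℝ) (hs : ∀ i, 0 < s i)
    (Bo : Matrix (Fin n) (Fin n) ℝ) (hBonn : ∀ i j, 0 ≤ Bo i j)
    (hBoirr : MatIrreducible Bo)
    (g : Fin n → ℝ) (hg : ∀ i, 0 < g i)
    -- `M = diag(s) B(o) − G(o)`
    (M : Matrix (Fin n) (Fin n) ℝ)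
    (hM : ∀ i j, M i j = s i * Bo i j - (if i = j then g i else 0))
    -- `p ≫ 0` is the normalized left eigenvector for the spectral abscissa of `M`
    (p : Fin n → ℝ) (hp : ∀ i, 0 < p i) (hpnorm : ∑ i, p i = 1)
    (hpeig : ∀ j, ∑ i, p i * M i j = specAbscissa M * p j)
    (x : ℝ → Fin n → ℝ) (tp : ℝ)
    (hdyn : ∀ i, HasDerivAt (fun t => x t i) (∑ j, M i j * x tp j) tp)
    (hxnn : ∀ i, 0 ≤ x tp i) (hxne : x tp ≠ 0)
    (hstat : HasDerivAt (fun t => ∑ i, p i * x t i) 0 tp) :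
    specAbscissa M = 0 ∧
      specRadius (Matrix.of fun i j => s i * Bo i j / g i) = 1 :=
  peak_infection_time_threshold_general s hs Bo hBonn g hg M hM p hp hpeig x tp hdyn hxnn hxne hstat
end

section
/- Suppose $x : [t_1, \infty) \to \mathbb{R}^n_{\ge 0}$ satisfies $\dot{x}(t) = M(t)x(t)$ where each $M(t)$ is Metzler and $M(t) \le \bar{M}$ entrywise for a fixed irreducible Metzler matrix $\bar{M}$ with spectral abscissa $\bar{\sigma}$ and positive left eigenvector $\bar{p}$ ($\bar{p}^\top \bar{M} = \bar{\sigma}\bar{p}^\top$, $\bar{p} \gg 0$). Then $\bar{p}^\top x(t) \le \bar{p}^\top x(t_1)\, e^{\bar{\sigma}(t - t_1)}$ for all $t \ge t_1$. In particular, if $\bar{\sigma} < 0$, then $x(t) \to \mathbf{0}$ exponentially fast. -/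
/-!
The weighted infection `V t = p ⬝ᵥ x t` obeys a scalar linear differential inequality: since
`p`, `x t` are nonnegative and `M t ≤ M̄` entrywise,
`V' = p ⬝ᵥ (M t *ᵥ x) ≤ p ⬝ᵥ (M̄ *ᵥ x) = (p ᵥ* M̄) ⬝ᵥ x = σ̄ V`.
Grönwall's inequality (monotonicity of `V t * exp (-σ̄ t)`) gives the exponential bound, and
`p ≫ 0` turns a bound on `V` into a bound on every coordinate of `x`.
-/

open Matrix Filter

open Set Real Topology

theorem le_mul_exp_of_hasDerivAt_le_mul {f f' : ℝ → ℝ} {σ a : ℝ}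
    (hf : ∀ t ≥ a, HasDerivAt f (f' t) t) (hf' : ∀ t ≥ a, f' t ≤ σ * f t) {t : ℝ} (ht : a ≤ t) :
    f t ≤ f a * exp (σ * (t - a)) := by
  set g : ℝ → ℝ := fun s => f s * exp (-(σ * s))
  have hg : ∀ s ≥ a, HasDerivAt g ((f' s - σ * f s) * exp (-(σ * s))) s := by
    intro s hs
    exact ((hf s hs).mul ((hasDerivAt_id' s).const_mul σ).fun_neg.exp).congr_deriv (by ring)
  have hanti : AntitoneOn g (Ici a) :=
    antitoneOn_of_hasDerivWithinAt_nonpos (convex_Ici a)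
      (fun s hs => (hg s hs).continuousAt.continuousWithinAt)
      (fun s hs => (hg s (interior_subset hs)).hasDerivWithinAt)
      (fun s hs => mul_nonpos_of_nonpos_of_nonneg
        (sub_nonpos.2 (hf' s (interior_subset hs))) (exp_pos _).le)
  calc f t = g t * exp (σ * t) := by
        simp only [g, mul_assoc, ← exp_add, neg_add_cancel, exp_zero, mul_one]
    _ ≤ g a * exp (σ * t) := by gcongr; exact hanti self_mem_Ici ht ht
    _ = f a * exp (σ * (t - a)) := by simp only [g, mul_assoc, ← exp_add]; ring_nf

section Weighted

variable {ι : Type*} [Fintype ι]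

theorem HasDerivAt.const_dotProduct {x : ℝ → ι → ℝ} {x' : ι → ℝ} {t : ℝ}
    (hx : ∀ i, HasDerivAt (fun τ => x τ i) (x' i) t) (p : ι → ℝ) :
    HasDerivAt (fun τ => p ⬝ᵥ x τ) (p ⬝ᵥ x') t :=
  HasDerivAt.fun_sum fun i _ => (hx i).const_mul (p i)

theorem dotProduct_mulVec_le_of_le_of_vecMul_eq_smul {R : Type*} [Semiring R] [PartialOrder R]
    [IsOrderedRing R] {p v : ι → R} {M N : Matrix ι ι R} {σ : R} (hp : 0 ≤ p) (hv : 0 ≤ v)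
    (hMN : ∀ i j, M i j ≤ N i j) (hN : p ᵥ* N = σ • p) :
    p ⬝ᵥ (M *ᵥ v) ≤ σ * (p ⬝ᵥ v) :=
  calc p ⬝ᵥ (M *ᵥ v) = (p ᵥ* M) ⬝ᵥ v := dotProduct_mulVec p M v
    _ ≤ (p ᵥ* N) ⬝ᵥ v := dotProduct_le_dotProduct_of_nonneg_right
        (fun j => dotProduct_le_dotProduct_of_nonneg_left (fun i => hMN i j) hp) hv
    _ = σ * (p ⬝ᵥ v) := by rw [hN, smul_dotProduct, smul_eq_mul]

theorem tendsto_apply_zero_of_dotProduct_le_mul_exp {x : ℝ → ι → ℝ} {p : ι → ℝ} {C σ a : ℝ}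
    (hp : ∀ i, 0 < p i) (hx : ∀ t ≥ a, 0 ≤ x t)
    (hbound : ∀ t ≥ a, p ⬝ᵥ x t ≤ C * exp (σ * (t - a))) (hσ : σ < 0) (i : ι) :
    Tendsto (fun t => x t i) atTop (𝓝 0) := by
  have hcoord : ∀ t ≥ a, x t i ≤ C * exp (σ * (t - a)) / p i := fun t ht => by
    rw [le_div_iff₀' (hp i)]
    exact (Finset.single_le_sum (fun j _ => mul_nonneg (hp j).le (hx t ht j))
      (Finset.mem_univ i)).trans (hbound t ht)
  have hexp : Tendsto (fun t => exp (σ * (t - a))) atTop (𝓝 0) :=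
    tendsto_exp_atBot.comp
      ((tendsto_atTop_add_const_right _ (-a) tendsto_id).const_mul_atTop_of_neg hσ)
  have hlim : Tendsto (fun t => C * exp (σ * (t - a)) / p i) atTop (𝓝 0) := by
    simpa using (hexp.const_mul C).div_const (p i)
  refine tendsto_of_tendsto_of_tendsto_of_le_of_le' tendsto_const_nhds hlim ?_ ?_
  · filter_upwards [eventually_ge_atTop a] with t ht using hx t ht i
  · filter_upwards [eventually_ge_atTop a] with t ht using hcoord t ht

end Weighted

theorem weighted_infection_exponential_upper_bound_general {n : ℕ}
    (t₁ : ℝ) (x : ℝ → Fin n → ℝ)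
    (hxnn : ∀ t ≥ t₁, ∀ i, 0 ≤ x t i)
    (Mt : ℝ → Matrix (Fin n) (Fin n) ℝ)
    (Mbar : Matrix (Fin n) (Fin n) ℝ)
    (hle : ∀ t ≥ t₁, ∀ i j, Mt t i j ≤ Mbar i j)
    (p : Fin n → ℝ) (hp : ∀ i, 0 < p i)
    (hpeig : ∀ j, ∑ i, p i * Mbar i j = specAbscissa Mbar * p j)
    (hdyn : ∀ t ≥ t₁, ∀ i, HasDerivAt (fun τ => x τ i) (∑ j, Mt t i j * x t j) t) :
    (∀ t ≥ t₁, ∑ i, p i * x t i ≤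
      (∑ i, p i * x t₁ i) * Real.exp (specAbscissa Mbar * (t - t₁))) ∧
    (specAbscissa Mbar < 0 → ∀ i, Tendsto (fun t => x t i) atTop (nhds 0)) := by
  have hweighted : ∀ t ≥ t₁, p ⬝ᵥ x t ≤ p ⬝ᵥ x t₁ * exp (specAbscissa Mbar * (t - t₁)) :=
    fun t ht => le_mul_exp_of_hasDerivAt_le_mul (f := fun τ => p ⬝ᵥ x τ)
      (fun s hs => HasDerivAt.const_dotProduct (hdyn s hs) p)
      (fun s hs => dotProduct_mulVec_le_of_le_of_vecMul_eq_smul (fun i => (hp i).le) (hxnn s hs)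
        (hle s hs) (funext hpeig)) ht
  exact ⟨hweighted, tendsto_apply_zero_of_dotProduct_le_mul_exp hp hxnn hweighted⟩

/-- exponential upper bound on the weighted average infection, and
exponential extinction when the dominating spectral abscissa is negative. -/
theorem weighted_infection_exponential_upper_bound {n : ℕ}
    (t₁ : ℝ) (x : ℝ → Fin n → ℝ)
    (hxnn : ∀ t ≥ t₁, ∀ i, 0 ≤ x t i)
    (Mt : ℝ → Matrix (Fin n) (Fin n) ℝ)
    (hMetz : ∀ t ≥ t₁, IsMetzler (Mt t))
    (Mbar : Matrix (Fin n) (Fin n) ℝ) (hMbarMetz : IsMetzler Mbar)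
    (hMbarirr : MatIrreducible Mbar)
    (hle : ∀ t ≥ t₁, ∀ i j, Mt t i j ≤ Mbar i j)
    (p : Fin n → ℝ) (hp : ∀ i, 0 < p i)
    (hpeig : ∀ j, ∑ i, p i * Mbar i j = specAbscissa Mbar * p j)
    (hdyn : ∀ t ≥ t₁, ∀ i, HasDerivAt (fun τ => x τ i) (∑ j, Mt t i j * x t j) t) :
    (∀ t ≥ t₁, ∑ i, p i * x t i ≤
      (∑ i, p i * x t₁ i) * Real.exp (specAbscissa Mbar * (t - t₁))) ∧
    (specAbscissa Mbar < 0 → ∀ i, Tendsto (fun t => x t i) atTop (nhds 0)) :=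
  weighted_infection_exponential_upper_bound_general t₁ x hxnn Mt Mbar hle p hp hpeig hdyn
end

section
/- In the coupled SIR-opinion system, if the infected state converges to zero and the susceptible state converges to some $s_e \in [0,1]^n$ exponentially fast, then the opinion state $o(t)$ converges exponentially fast to $o_e = (\bar{L}+I_n)^{-1}(\mathbf{1}_n - s_e)$. -/
/-!
Put `e = o - oₑ` and `u = sₑ - s`, so that `ė = u - (L̄ + I) e`. For small `h > 0` the matrix
`I - h (L̄ + I)` is entrywise nonnegative with row sums `1 - h`, so it contracts the sup norm by
the factor `1 - h`. Hence the upper right Dini derivative of `‖e‖∞` is at most `-‖e‖∞ + ‖u‖∞`,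
and comparison with `M e^{-ct}` for `c < min a 1` gives exponential decay. The same contraction
shows that `L̄ + I` is injective, hence invertible.
-/

open Matrix Filter

open Topology

theorem Matrix.norm_mulVec_le_of_nonneg_of_sum_le {m n : Type*} [Fintype m] [Fintype n]
    (P : Matrix m n ℝ) (hP : ∀ i j, 0 ≤ P i j) {ρ : ℝ} (hρ : 0 ≤ ρ) (hrow : ∀ i, ∑ j, P i j ≤ ρ)
    (v : n → ℝ) : ‖P *ᵥ v‖ ≤ ρ * ‖v‖ := by
  refine (pi_norm_le_iff_of_nonneg (by positivity)).2 fun i => ?_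
  calc ‖(P *ᵥ v) i‖ = ‖∑ j, P i j * v j‖ := rfl
    _ ≤ ∑ j, P i j * ‖v‖ := by
        refine (norm_sum_le _ _).trans (Finset.sum_le_sum fun j _ => ?_)
        rw [norm_mul, Real.norm_of_nonneg (hP i j)]
        exact mul_le_mul_of_nonneg_left (norm_le_pi_norm v j) (hP i j)
    _ = (∑ j, P i j) * ‖v‖ := Finset.sum_mul .. |>.symm
    _ ≤ ρ * ‖v‖ := mul_le_mul_of_nonneg_right (hrow i) (norm_nonneg v)

namespace IsLaplacian

variable {n : ℕ} {L : Matrix (Fin n) (Fin n) ℝ}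

theorem diag_nonneg (hL : IsLaplacian L) (i : Fin n) : 0 ≤ L i i := by
  have hrow := hL.2 i
  rw [← Finset.add_sum_erase _ _ (Finset.mem_univ i)] at hrow
  have hoff : ∑ j ∈ Finset.univ.erase i, L i j ≤ 0 :=
    Finset.sum_nonpos fun j hj => hL.1 i j (Finset.ne_of_mem_erase hj).symm
  linarith

theorem diag_le_trace (hL : IsLaplacian L) (i : Fin n) : L i i ≤ L.trace :=
  Finset.single_le_sum (f := fun j => L j j) (fun j _ => hL.diag_nonneg j) (Finset.mem_univ i)

theorem trace_nonneg (hL : IsLaplacian L) : 0 ≤ L.trace :=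
  Finset.sum_nonneg fun i _ => hL.diag_nonneg i

theorem norm_sub_smul_mulVec_le (hL : IsLaplacian L) {h : ℝ}
    (hh : h ∈ Set.Icc 0 (1 / (1 + L.trace))) (v : Fin n → ℝ) :
    ‖v - h • (L + 1) *ᵥ v‖ ≤ (1 - h) * ‖v‖ := by
  have htr := hL.trace_nonneg
  have h0 := hh.1
  have h1 : h * (1 + L.trace) ≤ 1 := (le_div_iff₀ (by linarith)).1 hh.2
  have hP : ∀ i j, 0 ≤ (1 - h • (L + 1)) i j := by
    intro i j
    rcases eq_or_ne i j with rfl | hij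
    · simp only [Matrix.sub_apply, Matrix.smul_apply, Matrix.add_apply, one_apply_eq,
        smul_eq_mul]
      nlinarith [hL.diag_le_trace i]
    · simp only [Matrix.sub_apply, Matrix.smul_apply, Matrix.add_apply, one_apply_ne hij,
        smul_eq_mul]
      nlinarith [hL.1 i j hij]
  have hrow : ∀ i, ∑ j, (1 - h • (L + 1)) i j = 1 - h := by
    intro i
    simp only [Matrix.sub_apply, Matrix.smul_apply, Matrix.add_apply, smul_eq_mul,
      Finset.sum_sub_distrib, ← Finset.mul_sum, Finset.sum_add_distrib, hL.2 i, one_apply,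
      Finset.sum_ite_eq, Finset.mem_univ, if_true]
    ring
  have hv : v - h • (L + 1) *ᵥ v = (1 - h • (L + 1)) *ᵥ v := by
    rw [sub_mulVec, one_mulVec, smul_mulVec]
  rw [hv]
  exact norm_mulVec_le_of_nonneg_of_sum_le _ hP (by nlinarith) (fun i => (hrow i).le) v

theorem isUnit_add_one (hL : IsLaplacian L) : IsUnit (L + 1) := by
  have hh : (0 : ℝ) < 1 / (1 + L.trace) := by have := hL.trace_nonneg; positivity
  rw [← mulVec_injective_iff_isUnit]
  intro v w hvw
  have hker : (L + 1) *ᵥ (v - w) = 0 := by rw [mulVec_sub, hvw, sub_self]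
  have hcontr := hL.norm_sub_smul_mulVec_le ⟨hh.le, le_rfl⟩ (v - w)
  rw [hker, smul_zero, sub_zero] at hcontr
  have hnorm : ‖v - w‖ = 0 := by nlinarith [norm_nonneg (v - w)]
  exact sub_eq_zero.1 (norm_eq_zero.1 hnorm)

end IsLaplacian

section DecayEstimate

variable {E : Type*} [NormedAddCommGroup E] [NormedSpace ℝ E] {A : E → E} {μ h₀ : ℝ}

theorem eventually_slope_norm_lt_of_contraction (hh₀ : 0 < h₀)
    (hA : ∀ v, ∀ h ∈ Set.Icc 0 h₀, ‖v - h • A v‖ ≤ (1 - μ * h) * ‖v‖)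
    {e : ℝ → E} {w : E} {y : ℝ} (he : HasDerivWithinAt e (w - A (e y)) (Set.Ici y) y)
    {r : ℝ} (hr : -μ * ‖e y‖ + ‖w‖ < r) :
    ∀ᶠ z in 𝓝[>] y, slope (fun t => ‖e t‖) y z < r := by
  set ε := (r - (-μ * ‖e y‖ + ‖w‖)) / 2
  have hε : 0 < ε := by simp only [ε]; linarith
  have hlo := ((hasDerivWithinAt_iff_isLittleO.1 he).def hε).filter_mono
    (nhdsWithin_mono _ Set.Ioi_subset_Ici_self)
  have hnear : ∀ᶠ z in 𝓝[>] y, z ∈ Set.Ioc y (y + h₀) :=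
    Ioc_mem_nhdsGT (by linarith)
  filter_upwards [hlo, hnear] with z hrem ⟨hyz, hzh⟩
  have hd : 0 < z - y := sub_pos.2 hyz
  have hstep : ‖e y - (z - y) • A (e y)‖ ≤ (1 - μ * (z - y)) * ‖e y‖ :=
    hA _ _ ⟨hd.le, by linarith⟩
  have hez : ‖e z‖ ≤ (1 - μ * (z - y)) * ‖e y‖ + (z - y) * ‖w‖ + ε * (z - y) := by
    have hsplit : e z = (e y - (z - y) • A (e y)) + (z - y) • w
        + (e z - e y - (z - y) • (w - A (e y))) := by
      rw [smul_sub]; abel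
    rw [hsplit]
    refine (norm_add₃_le ..).trans ?_
    rw [Real.norm_of_nonneg hd.le] at hrem
    rw [norm_smul, Real.norm_of_nonneg hd.le]
    linarith
  have hlt : (z - y) * (-μ * ‖e y‖ + ‖w‖ + ε) < (z - y) * r :=
    mul_lt_mul_of_pos_left (by simp only [ε]; linarith) hd
  rw [slope_def_field, div_lt_iff₀ hd]
  linarith

theorem exists_norm_le_mul_exp_of_contraction (hμ : 0 < μ) (hh₀ : 0 < h₀)
    (hA : ∀ v, ∀ h ∈ Set.Icc 0 h₀, ‖v - h • A v‖ ≤ (1 - μ * h) * ‖v‖)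
    {e u : ℝ → E} (he : ∀ t ≥ 0, HasDerivAt e (u t - A (e t)) t)
    {C a : ℝ} (ha : 0 < a) (hu : ∀ t ≥ 0, ‖u t‖ ≤ C * Real.exp (-a * t)) :
    ∃ M c : ℝ, 0 < c ∧ ∀ t ≥ 0, ‖e t‖ ≤ M * Real.exp (-c * t) := by
  set c := min a μ / 2
  have hc : 0 < c := by positivity
  have hca : c ≤ a := by have := min_le_left a μ; simp only [c]; linarith
  have hcμ : c < μ := by have := min_le_right a μ; simp only [c]; linarith
  -- `(μ - c) M > |C|` makes `M e^{-ct}` a strict supersolution of `f' = -μ f + ‖u‖`.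
  set M := max ‖e 0‖ (|C| / (μ - c) + 1)
  have hCM : |C| < (μ - c) * M := by
    have h := le_max_right ‖e 0‖ (|C| / (μ - c) + 1)
    have h' : |C| < (μ - c) * (|C| / (μ - c) + 1) := by
      rw [mul_add, mul_div_cancel₀ _ (sub_pos.2 hcμ).ne']; linarith
    exact h'.trans_le (mul_le_mul_of_nonneg_left h (sub_pos.2 hcμ).le)
  refine ⟨M, c, hc, fun T hT => ?_⟩
  have hB : ∀ t, HasDerivAt (fun t => M * Real.exp (-c * t)) (M * (Real.exp (-c * t) * -c)) t :=
    fun t => (((hasDerivAt_id t).const_mul (-c)).exp.congr_deriv (by simp)).const_mul M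
  have hboundary : ∀ y ∈ Set.Ico 0 T, ‖e y‖ = M * Real.exp (-c * y) →
      -μ * ‖e y‖ + ‖u y‖ < M * (Real.exp (-c * y) * -c) := by
    intro y hy hey
    have hexp : Real.exp (-a * y) ≤ Real.exp (-c * y) :=
      Real.exp_le_exp.2 (by nlinarith [hy.1])
    have hu' : ‖u y‖ < (μ - c) * M * Real.exp (-c * y) :=
      calc ‖u y‖ ≤ |C| * Real.exp (-c * y) :=
            (hu y hy.1).trans (mul_le_mul (le_abs_self C) hexp (Real.exp_nonneg _) (abs_nonneg C))
        _ < (μ - c) * M * Real.exp (-c * y) := mul_lt_mul_of_pos_right hCM (Real.exp_pos _)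
    rw [hey]
    linarith
  exact image_le_of_liminf_slope_right_lt_deriv_boundary
    (f' := fun t => -μ * ‖e t‖ + ‖u t‖)
    (fun y hy => (he y hy.1).continuousAt.norm.continuousWithinAt)
    (fun y hy _ hr =>
      (eventually_slope_norm_lt_of_contraction hh₀ hA (he y hy.1).hasDerivWithinAt hr).frequently)
    (by simpa only [mul_zero, Real.exp_zero, mul_one] using le_max_left ‖e 0‖ _)
    hB hboundary ⟨hT, le_rfl⟩

end DecayEstimate

theorem opinion_converges_exponentially_general {n : ℕ}
    (L : Matrix (Fin n) (Fin n) ℝ) (hL : IsLaplacian L)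
    (s o : ℝ → Fin n → ℝ) (se : Fin n → ℝ)
    -- the susceptible state converges to `s_e` exponentially fast
    (hs : ∃ C a : ℝ, 0 < a ∧ ∀ t ≥ (0:ℝ), ∀ i, |s t i - se i| ≤ C * Real.exp (-a * t))
    -- opinion dynamics `ȯ = (1 - s) - (L̄+I)o`
    (hdo : ∀ t ≥ (0:ℝ), ∀ i, HasDerivAt (fun τ => o τ i)
      ((1 - s t i) - ((L + 1).mulVec (o t)) i) t) :
    (L + 1).mulVec ((L + 1)⁻¹.mulVec ((fun _ => 1) - se)) = (fun _ => 1) - se ∧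
    ∃ C c : ℝ, 0 < c ∧ ∀ t ≥ (0:ℝ), ∀ i,
      |o t i - (L + 1)⁻¹.mulVec ((fun _ => 1) - se) i| ≤ C * Real.exp (-c * t) := by
  set oe := (L + 1)⁻¹ *ᵥ ((fun _ => 1) - se)
  have hsolve : (L + 1) *ᵥ oe = (fun _ => 1) - se := by
    rw [mulVec_mulVec, mul_nonsing_inv _ ((isUnit_iff_isUnit_det _).1 hL.isUnit_add_one),
      one_mulVec]
  refine ⟨hsolve, ?_⟩
  obtain ⟨C, a, ha, hsC⟩ := hs
  have hh₀ : (0 : ℝ) < 1 / (1 + L.trace) := by have := hL.trace_nonneg; positivity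
  have hA : ∀ v, ∀ h ∈ Set.Icc 0 (1 / (1 + L.trace)),
      ‖v - h • (L + 1) *ᵥ v‖ ≤ (1 - 1 * h) * ‖v‖ := fun v h hh => by
    simpa only [one_mul] using hL.norm_sub_smul_mulVec_le hh v
  have he : ∀ t ≥ 0, HasDerivAt (fun t => o t - oe) ((se - s t) - (L + 1) *ᵥ (o t - oe)) t :=
    fun t ht => hasDerivAt_pi.2 fun i => ((hdo t ht i).sub_const (oe i)).congr_deriv (by
      simp only [mulVec_sub, hsolve, Pi.sub_apply]
      ring)
  have hu : ∀ t ≥ 0, ‖se - s t‖ ≤ |C| * Real.exp (-a * t) := fun t ht =>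
    (pi_norm_le_iff_of_nonneg (by positivity)).2 fun i => by
      rw [Pi.sub_apply, Real.norm_eq_abs, abs_sub_comm]
      exact (hsC t ht i).trans (mul_le_mul_of_nonneg_right (le_abs_self C) (Real.exp_nonneg _))
  obtain ⟨M, c, hc, hM⟩ := exists_norm_le_mul_exp_of_contraction one_pos hh₀ hA he ha hu
  exact ⟨M, c, hc, fun t ht i => (norm_le_pi_norm (o t - oe) i).trans (hM t ht)⟩

/-- if the infected state converges to zero and the susceptible state
converges to `s_e` exponentially fast, then the opinion state converges exponentially
fast to `o_e = (L̄+I)⁻¹(1 - s_e)`. -/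
theorem opinion_converges_exponentially {n : ℕ}
    (L : Matrix (Fin n) (Fin n) ℝ) (hL : IsLaplacian L) (hirr : MatIrreducible L)
    (s x o : ℝ → Fin n → ℝ) (se : Fin n → ℝ)
    -- the infected state converges to zero exponentially fast
    (hx : ∃ C a : ℝ, 0 < a ∧ ∀ t ≥ (0:ℝ), ∀ i, |x t i| ≤ C * Real.exp (-a * t))
    -- the susceptible state converges to `s_e` exponentially fast
    (hs : ∃ C a : ℝ, 0 < a ∧ ∀ t ≥ (0:ℝ), ∀ i, |s t i - se i| ≤ C * Real.exp (-a * t))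
    -- opinion dynamics `ȯ = (1 - s) - (L̄+I)o`
    (hdo : ∀ t ≥ (0:ℝ), ∀ i, HasDerivAt (fun τ => o τ i)
      ((1 - s t i) - ((L + 1).mulVec (o t)) i) t) :
    (L + 1).mulVec ((L + 1)⁻¹.mulVec ((fun _ => 1) - se)) = (fun _ => 1) - se ∧
    ∃ C c : ℝ, 0 < c ∧ ∀ t ≥ (0:ℝ), ∀ i,
      |o t i - (L + 1)⁻¹.mulVec ((fun _ => 1) - se) i| ≤ C * Real.exp (-c * t) :=
  opinion_converges_exponentially_general L hL s o se hs hdo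
end
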